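/- Correctness of the at-least-k-successors formula: let φ be a QCTL formula, k ≥ 1, and P = {p_1,…,p_k} atomic propositions not occurring in φ; then for every Kripke structure K and state x, K,x ⊨ ∃P.( ⋀_{1≤i≤k} EX( p_i ∧ ⋀_{i'≠i} ¬p_{i'} ) ∧ AX( (⋁_{1≤i≤k} p_i) → φ ) ) if and only if x has at least k distinct E-successors satisfying φ. -/

import Mathlib

open Classical

/-- Syntax of QCTL: `φ ::= q | ¬φ | φ∨ψ | EX φ | E φ U ψ | A φ U ψ | ∃p.φ`. -/
inductive QCTL (AP : Type) : Type where
  | atom : AP → QCTL AP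
  | qneg : QCTL AP → QCTL AP
  | qor  : QCTL AP → QCTL AP → QCTL AP
  | qEX  : QCTL AP → QCTL AP
  | qEU  : QCTL AP → QCTL AP → QCTL AP
  | qAU  : QCTL AP → QCTL AP → QCTL AP
  | qexi : AP → QCTL AP → QCTL AP

/-- A Kripke structure over atomic propositions `AP` with (finite) state space `V`:
a serial edge relation and a labelling function. -/
structure Kripke (AP V : Type) where
  E : V → V → Prop
  serial : ∀ v, ∃ w, E v w
  label : V → Set AP

variable {AP V : Type}

/-- `K'` agrees with `K` (same edges) except possibly on the labelling of `p`. -/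
def Kripke.AgreeExcept (K K' : Kripke AP V) (p : AP) : Prop :=
  K'.E = K.E ∧ ∀ v q, q ≠ p → (q ∈ K'.label v ↔ q ∈ K.label v)

/-- Structure semantics of QCTL. -/
def QCTL.sat : QCTL AP → Kripke AP V → V → Prop
  | .atom p, K, x => p ∈ K.label x
  | .qneg φ, K, x => ¬ φ.sat K x
  | .qor φ ψ, K, x => φ.sat K x ∨ ψ.sat K x
  | .qEX φ, K, x => ∃ y, K.E x y ∧ φ.sat K y
  | .qEU φ ψ, K, x => ∃ ρ : ℕ → V, ρ 0 = x ∧ (∀ i, K.E (ρ i) (ρ (i + 1))) ∧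
      ∃ i, ψ.sat K (ρ i) ∧ ∀ j < i, φ.sat K (ρ j)
  | .qAU φ ψ, K, x => ∀ ρ : ℕ → V, ρ 0 = x → (∀ i, K.E (ρ i) (ρ (i + 1))) →
      ∃ i, ψ.sat K (ρ i) ∧ ∀ j < i, φ.sat K (ρ j)
  | .qexi p φ, K, x => ∃ K' : Kripke AP V, K.AgreeExcept K' p ∧ φ.sat K' x

namespace QCTL

def qand (φ ψ : QCTL AP) : QCTL AP := qneg (qor (qneg φ) (qneg ψ))
def qimp (φ ψ : QCTL AP) : QCTL AP := qor (qneg φ) ψ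
def qiff (φ ψ : QCTL AP) : QCTL AP := qand (qimp φ ψ) (qimp ψ φ)
def qtop [Inhabited AP] : QCTL AP := qor (atom default) (qneg (atom default))
def qbot [Inhabited AP] : QCTL AP := qneg qtop
def qAX (φ : QCTL AP) : QCTL AP := qneg (qEX (qneg φ))
def qEF [Inhabited AP] (φ : QCTL AP) : QCTL AP := qEU qtop φ
def qAG [Inhabited AP] (φ : QCTL AP) : QCTL AP := qneg (qEF (qneg φ))
def qall (p : AP) (φ : QCTL AP) : QCTL AP := qneg (qexi p (qneg φ))

/-- All atomic propositions occurring in a formula (free or bound). -/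
def atoms : QCTL AP → Set AP
  | atom p => {p}
  | qneg φ => φ.atoms
  | qor φ ψ => φ.atoms ∪ ψ.atoms
  | qEX φ => φ.atoms
  | qEU φ ψ => φ.atoms ∪ ψ.atoms
  | qAU φ ψ => φ.atoms ∪ ψ.atoms
  | qexi p φ => insert p φ.atoms

/-- Size of a formula. -/
def qsize : QCTL AP → ℕ
  | atom _ => 1
  | qneg φ => φ.qsize + 1
  | qor φ ψ => φ.qsize + ψ.qsize + 1
  | qEX φ => φ.qsize + 1
  | qEU φ ψ => φ.qsize + ψ.qsize + 1
  | qAU φ ψ => φ.qsize + ψ.qsize + 1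
  | qexi _ φ => φ.qsize + 1

end QCTL

/-- Equivalence of two QCTL formulas: same truth value at every state of every
(finite) Kripke structure. -/
def QEquiv (φ ψ : QCTL AP) : Prop :=
  ∀ (V : Type) [Fintype V] (K : Kripke AP V) (x : V), φ.sat K x ↔ ψ.sat K x

/-- `∃p₁.…∃pₙ.φ` for a list of atomic propositions. -/
def exiMany {AP : Type} (l : List AP) (φ : QCTL AP) : QCTL AP := l.foldr QCTL.qexi φ

/-- Conjunction of a list of formulas, with a final base conjunct. -/
def conjList {AP : Type} (l : List (QCTL AP)) (base : QCTL AP) : QCTL AP :=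
  l.foldr QCTL.qand base

/-- Disjunction of a list of formulas, with a final base disjunct. -/
def disjList {AP : Type} (l : List (QCTL AP)) (base : QCTL AP) : QCTL AP :=
  l.foldr QCTL.qor base

/-! A witness for the block `∃P` is a relabelling of `K` on `P`, and since `P` is fresh for `φ`
the relabelling does not change the truth of `φ`. Given `k` distinct `φ`-successors `f i`, label
`p i` exactly at `f i`: every conjunct `EX (pᵢ ∧ ⋀_{j ≠ i} ¬pⱼ)` is witnessed by `f i`, and every
marked successor satisfies `φ`. Conversely, the successors witnessing these conjuncts carry
pairwise different marks, so they are distinct, and the `AX` conjunct makes them satisfy `φ`. -/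

namespace Kripke

def AgreeOn (K K' : Kripke AP V) (S : Set AP) : Prop :=
  K'.E = K.E ∧ ∀ v, ∀ q ∈ S, (q ∈ K'.label v ↔ q ∈ K.label v)

theorem AgreeOn.refl (K : Kripke AP V) (S : Set AP) : K.AgreeOn K S :=
  ⟨rfl, fun _ _ _ => Iff.rfl⟩

theorem AgreeOn.symm {K K' : Kripke AP V} {S : Set AP} (h : K.AgreeOn K' S) :
    K'.AgreeOn K S :=
  ⟨h.1.symm, fun v q hq => (h.2 v q hq).symm⟩

theorem AgreeOn.trans {K₁ K₂ K₃ : Kripke AP V} {S T : Set AP} (h₁₂ : K₁.AgreeOn K₂ S)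
    (h₂₃ : K₂.AgreeOn K₃ T) : K₁.AgreeOn K₃ (S ∩ T) :=
  ⟨h₂₃.1.trans h₁₂.1, fun v q hq => (h₂₃.2 v q hq.2).trans (h₁₂.2 v q hq.1)⟩

theorem AgreeOn.mono {K K' : Kripke AP V} {S T : Set AP} (h : K.AgreeOn K' T) (hST : S ⊆ T) :
    K.AgreeOn K' S :=
  ⟨h.1, fun v q hq => h.2 v q (hST hq)⟩

def relabel (K : Kripke AP V) (S : Set AP) (L : V → Set AP) : Kripke AP V :=
  ⟨K.E, K.serial, fun v => {q | if q ∈ S then q ∈ L v else q ∈ K.label v}⟩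

theorem mem_relabel_label {K : Kripke AP V} {S : Set AP} {L : V → Set AP} {v : V} {q : AP} :
    q ∈ (K.relabel S L).label v ↔ if q ∈ S then q ∈ L v else q ∈ K.label v :=
  Iff.rfl

theorem agreeOn_relabel_compl (K : Kripke AP V) (S : Set AP) (L : V → Set AP) :
    K.AgreeOn (K.relabel S L) Sᶜ :=
  ⟨rfl, fun v q hq => by rw [mem_relabel_label, if_neg hq]⟩

end Kripke

namespace QCTL

@[simp]
theorem sat_qand (φ ψ : QCTL AP) (K : Kripke AP V) (x : V) :
    (qand φ ψ).sat K x ↔ φ.sat K x ∧ ψ.sat K x := by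
  simp [qand, sat]

@[simp]
theorem sat_qimp (φ ψ : QCTL AP) (K : Kripke AP V) (x : V) :
    (qimp φ ψ).sat K x ↔ (φ.sat K x → ψ.sat K x) := by
  simp [qimp, sat, imp_iff_not_or]

@[simp]
theorem sat_qbot [Inhabited AP] (K : Kripke AP V) (x : V) : ¬ (qbot : QCTL AP).sat K x := by
  simp [qbot, qtop, sat]

@[simp]
theorem sat_qAX (φ : QCTL AP) (K : Kripke AP V) (x : V) :
    (qAX φ).sat K x ↔ ∀ y, K.E x y → φ.sat K y := by
  simp [qAX, sat]

theorem sat_congr_of_agreeOn {φ : QCTL AP} {K K' : Kripke AP V} (h : K.AgreeOn K' φ.atoms)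
    (x : V) : φ.sat K' x ↔ φ.sat K x := by
  induction φ generalizing K K' x with
  | atom q => exact h.2 x q rfl
  | qneg φ ih => exact not_congr (ih h x)
  | qor φ ψ ihφ ihψ =>
    exact or_congr (ihφ (h.mono Set.subset_union_left) x) (ihψ (h.mono Set.subset_union_right) x)
  | qEX φ ih =>
    simp only [sat, h.1]
    exact exists_congr fun y => and_congr_right fun _ => ih h y
  | qEU φ ψ ihφ ihψ =>
    simp only [sat, h.1]
    refine exists_congr fun ρ => and_congr_right fun _ => and_congr_right fun _ =>
      exists_congr fun i => and_congr (ihψ (h.mono Set.subset_union_right) _)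
        (forall₂_congr fun j _ => ihφ (h.mono Set.subset_union_left) _)
  | qAU φ ψ ihφ ihψ =>
    simp only [sat, h.1]
    refine forall_congr' fun ρ => imp_congr_right fun _ => imp_congr_right fun _ =>
      exists_congr fun i => and_congr (ihψ (h.mono Set.subset_union_right) _)
        (forall₂_congr fun j _ => ihφ (h.mono Set.subset_union_left) _)
  | qexi p ψ ih =>
    have transfer : ∀ {A B : Kripke AP V}, A.AgreeOn B (insert p ψ.atoms) →
        (qexi p ψ).sat A x → (qexi p ψ).sat B x := by
      rintro A B hAB ⟨A', hAA', hA'⟩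
      refine ⟨B.relabel ψ.atoms A'.label, ⟨rfl, fun v q hq => ?_⟩, ?_⟩
      · rw [Kripke.mem_relabel_label]
        split_ifs with hqψ
        · exact (hAA'.2 v q hq).trans (hAB.2 v q (Or.inr hqψ)).symm
        · rfl
      · refine (ih ⟨?_, fun v q hq => ?_⟩ x).mpr hA'
        · exact hAB.1.trans hAA'.1.symm
        · rw [Kripke.mem_relabel_label, if_pos hq]
    exact ⟨transfer h.symm, transfer h⟩

end QCTL

theorem sat_conjList (l : List (QCTL AP)) (b : QCTL AP) (K : Kripke AP V) (x : V) :
    (conjList l b).sat K x ↔ (∀ ψ ∈ l, ψ.sat K x) ∧ b.sat K x := by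
  induction l with
  | nil => simp [conjList]
  | cons a l ih => simp_all [conjList, and_assoc]

theorem sat_disjList [Inhabited AP] (l : List (QCTL AP)) (K : Kripke AP V) (x : V) :
    (disjList l QCTL.qbot).sat K x ↔ ∃ ψ ∈ l, ψ.sat K x := by
  induction l with
  | nil => simp [disjList]
  | cons a l ih => simp_all [disjList, QCTL.sat]

theorem sat_exiMany (l : List AP) (ψ : QCTL AP) (K : Kripke AP V) (x : V) :
    (exiMany l ψ).sat K x ↔ ∃ K' : Kripke AP V, K.AgreeOn K' {q | q ∉ l} ∧ ψ.sat K' x := by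
  induction l generalizing K with
  | nil =>
    refine ⟨fun h => ⟨K, Kripke.AgreeOn.refl K _, h⟩, fun ⟨K', hK', h⟩ => ?_⟩
    exact (QCTL.sat_congr_of_agreeOn (hK'.mono fun q _ => List.not_mem_nil) x).mp h
  | cons a l ih =>
    change (∃ K₁, K.AgreeOn K₁ {a}ᶜ ∧ (exiMany l ψ).sat K₁ x) ↔ _
    simp only [ih]
    constructor
    · rintro ⟨K₁, h₁, K', h', hψ⟩
      refine ⟨K', (h₁.trans h').mono fun q hq => ⟨?_, ?_⟩, hψ⟩
      · exact fun hqa => hq (hqa ▸ List.mem_cons_self)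
      · exact fun hql => hq (List.mem_cons_of_mem a hql)
    · rintro ⟨K', h', hψ⟩
      refine ⟨K.relabel {a} K'.label, K.agreeOn_relabel_compl _ _, K', ⟨h'.1, fun v q hq => ?_⟩, hψ⟩
      rw [Kripke.mem_relabel_label]
      split_ifs with hqa
      · rfl
      · exact h'.2 v q (by simp_all)

section AtLeastSuccessors

variable {ι : Type*} {K K' : Kripke AP V} {x : V} {φ : QCTL AP} {p : ι → AP}

theorem atoms_subset_compl_range (hfresh : ∀ i, p i ∉ φ.atoms) : φ.atoms ⊆ (Set.range p)ᶜ :=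
  fun _ hq ⟨i, hi⟩ => hfresh i (hi ▸ hq)

theorem exists_injective_successors_of_marking (hfresh : ∀ i, p i ∉ φ.atoms)
    (hK' : K.AgreeOn K' (Set.range p)ᶜ)
    (hmark : ∀ i, ∃ y, K'.E x y ∧ p i ∈ K'.label y ∧ ∀ j ≠ i, p j ∉ K'.label y)
    (hφ : ∀ y, K'.E x y → (∃ i, p i ∈ K'.label y) → φ.sat K' y) :
    ∃ f : ι → V, Function.Injective f ∧ ∀ i, K.E x (f i) ∧ φ.sat K (f i) := by
  choose f hfE hfp hfnot using hmark
  refine ⟨f, fun i j hij => by_contra fun hne => hfnot j i hne (hij ▸ hfp i), fun i => ?_⟩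
  have hφK := QCTL.sat_congr_of_agreeOn (hK'.mono (atoms_subset_compl_range hfresh)) (f i)
  exact ⟨hK'.1 ▸ hfE i, hφK.mp (hφ _ (hfE i) ⟨i, hfp i⟩)⟩

theorem exists_marking_of_injective_successors (hinj : Function.Injective p)
    (hfresh : ∀ i, p i ∉ φ.atoms) {f : ι → V} (hf_inj : Function.Injective f)
    (hf : ∀ i, K.E x (f i) ∧ φ.sat K (f i)) :
    ∃ K' : Kripke AP V, K.AgreeOn K' (Set.range p)ᶜ ∧
      (∀ i, ∃ y, K'.E x y ∧ p i ∈ K'.label y ∧ ∀ j ≠ i, p j ∉ K'.label y) ∧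
      ∀ y, K'.E x y → (∃ i, p i ∈ K'.label y) → φ.sat K' y := by
  set K' := K.relabel (Set.range p) fun v => p '' {i | f i = v}
  have hmarked : ∀ i v, p i ∈ K'.label v ↔ f i = v := by
    intro i v
    rw [Kripke.mem_relabel_label, if_pos (Set.mem_range_self i), hinj.mem_set_image]
    rfl
  have hφ : ∀ y, φ.sat K' y ↔ φ.sat K y :=
    QCTL.sat_congr_of_agreeOn ((K.agreeOn_relabel_compl _ _).mono (atoms_subset_compl_range hfresh))
  refine ⟨K', K.agreeOn_relabel_compl _ _, fun i => ⟨f i, (hf i).1, ?_, ?_⟩, ?_⟩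
  · exact (hmarked i _).mpr rfl
  · exact fun j hji hj => hji (hf_inj ((hmarked j _).mp hj))
  · rintro y - ⟨i, hi⟩
    rw [← (hmarked i y).mp hi, hφ]
    exact (hf i).2

end AtLeastSuccessors

theorem sat_atLeastMatrix [Inhabited AP] {k : ℕ} (K : Kripke AP V) (x : V) (φ : QCTL AP)
    (p : Fin k → AP) :
    (conjList
        ((List.finRange k).map fun i =>
          QCTL.qEX (conjList
            (((List.finRange k).filter (fun j => decide (j ≠ i))).map
              fun j => QCTL.qneg (QCTL.atom (p j)))
            (QCTL.atom (p i))))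
        (QCTL.qAX (QCTL.qimp
          (disjList ((List.finRange k).map fun i => QCTL.atom (p i)) QCTL.qbot)
          φ))).sat K x ↔
      (∀ i, ∃ y, K.E x y ∧ p i ∈ K.label y ∧ ∀ j ≠ i, p j ∉ K.label y) ∧
        ∀ y, K.E x y → (∃ i, p i ∈ K.label y) → φ.sat K y := by
  simp [sat_conjList, sat_disjList, QCTL.sat, and_comm]

theorem atLeastK_X_correct_general {AP V : Type} [Inhabited AP]
    (K : Kripke AP V) (x : V) (φ : QCTL AP) (k : ℕ)
    (p : Fin k → AP) (hinj : Function.Injective p) (hfresh : ∀ i, p i ∉ φ.atoms) :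
    (exiMany ((List.finRange k).map p)
      (conjList
        ((List.finRange k).map fun i =>
          QCTL.qEX (conjList
            (((List.finRange k).filter (fun j => decide (j ≠ i))).map
              fun j => QCTL.qneg (QCTL.atom (p j)))
            (QCTL.atom (p i))))
        (QCTL.qAX (QCTL.qimp
          (disjList ((List.finRange k).map fun i => QCTL.atom (p i)) QCTL.qbot)
          φ)))).sat K x ↔
      (∃ f : Fin k → V, Function.Injective f ∧ ∀ i, K.E x (f i) ∧ φ.sat K (f i)) := by
  have hfree : {q | q ∉ (List.finRange k).map p} = (Set.range p)ᶜ := by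
    ext q
    simp
  simp only [sat_exiMany, sat_atLeastMatrix, hfree]
  constructor
  · rintro ⟨K', hK', hmark, hφ⟩
    exact exists_injective_successors_of_marking hfresh hK' hmark hφ
  · rintro ⟨f, hf_inj, hf⟩
    exact exists_marking_of_injective_successors hinj hfresh hf_inj hf

/-- Correctness of the at-least-`k`-successors formula
`E_{≥k}X φ := ∃p₁…pₖ.( ⋀ᵢ EX(pᵢ ∧ ⋀_{i'≠i}¬p_{i'}) ∧ AX((⋁ᵢ pᵢ) → φ) )`
(for distinct `p₁,…,pₖ` not occurring in `φ`): it holds at `x` iff `x` has at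
least `k` distinct `E`-successors satisfying `φ`. -/
theorem atLeastK_X_correct {AP V : Type} [Inhabited AP] [Fintype V]
    (K : Kripke AP V) (x : V) (φ : QCTL AP) (k : ℕ) (hk : 1 ≤ k)
    (p : Fin k → AP) (hinj : Function.Injective p) (hfresh : ∀ i, p i ∉ φ.atoms) :
    (exiMany ((List.finRange k).map p)
      (conjList
        ((List.finRange k).map fun i =>
          QCTL.qEX (conjList
            (((List.finRange k).filter (fun j => decide (j ≠ i))).map
              fun j => QCTL.qneg (QCTL.atom (p j)))
            (QCTL.atom (p i))))
        (QCTL.qAX (QCTL.qimp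
          (disjList ((List.finRange k).map fun i => QCTL.atom (p i)) QCTL.qbot)
          φ)))).sat K x ↔
      (∃ f : Fin k → V, Function.Injective f ∧ ∀ i, K.E x (f i) ∧ φ.sat K (f i)) :=
  atLeastK_X_correct_general K x φ k p hinj hfresh
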